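/- arXiv:1507.08908 — 4 statements merged into one kernel-verified Lean document; each statement's English description precedes it below -/
import Mathlib

section
/- Let (A,[·,·],∘) be a super Gel'fand-Dorfman bialgebra and α an even algebra endomorphism of both operations, i.e. α([x,y]) = [α(x),α(y)] and α(x∘y) = α(x)∘α(y). Define x ∘_α y = α(x)∘α(y) and [x,y]_α = [α(x),α(y)]. Then (A, [·,·]_α, ∘_α, α) is a super Hom-Gel'fand-Dorfman bialgebra. -/
noncomputable section

/-- The sign `(-1)^{|x||y|}` attached to parities `i, j` in `ℤ₂`. -/
def sg (i j : ZMod 2) : ℂ := (-1 : ℂ) ^ (i.val * j.val)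

variable {A : Type*} [AddCommGroup A] [Module ℂ A]

/-- `gr` makes `A` into a superspace: `A = A₀ ⊕ A₁`. -/
def IsSupergrading (gr : ZMod 2 → Submodule ℂ A) : Prop :=
  (∀ x : A, ∃ x0 ∈ gr 0, ∃ x1 ∈ gr 1, x = x0 + x1) ∧ (gr 0 ⊓ gr 1 = ⊥)

/-- An even linear map: it preserves the grading. -/
def EvenLin (gr : ZMod 2 → Submodule ℂ A) (α : A →ₗ[ℂ] A) : Prop :=
  ∀ i : ZMod 2, ∀ x ∈ gr i, α x ∈ gr i

/-- An even bilinear map: it adds parities. -/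
def EvenBilin (gr : ZMod 2 → Submodule ℂ A) (m : A →ₗ[ℂ] A →ₗ[ℂ] A) : Prop :=
  ∀ i j : ZMod 2, ∀ x ∈ gr i, ∀ y ∈ gr j, m x y ∈ gr (i + j)

/-- A Hom-Lie superalgebra structure on the superspace `(A, gr)`. -/
def HomLieSuper (gr : ZMod 2 → Submodule ℂ A) (br : A →ₗ[ℂ] A →ₗ[ℂ] A)
    (α : A →ₗ[ℂ] A) : Prop :=
  EvenLin gr α ∧ EvenBilin gr br ∧
  (∀ (i j : ZMod 2), ∀ x ∈ gr i, ∀ y ∈ gr j, br x y = -(sg i j • br y x)) ∧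
  (∀ (i j k : ZMod 2), ∀ x ∈ gr i, ∀ y ∈ gr j, ∀ z ∈ gr k,
    sg i k • br (br x y) (α z) + sg i j • br (br y z) (α x)
      + sg j k • br (br z x) (α y) = 0)

/-- A Hom-Novikov superalgebra structure on the superspace `(A, gr)`. -/
def HomNovikovSuper (gr : ZMod 2 → Submodule ℂ A) (c : A →ₗ[ℂ] A →ₗ[ℂ] A)
    (α : A →ₗ[ℂ] A) : Prop :=
  EvenLin gr α ∧ EvenBilin gr c ∧
  (∀ (i j k : ZMod 2), ∀ x ∈ gr i, ∀ y ∈ gr j, ∀ z ∈ gr k,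
    c (c x y) (α z) - c (α x) (c y z) = sg i j • (c (c y x) (α z) - c (α y) (c x z))) ∧
  (∀ (i j k : ZMod 2), ∀ x ∈ gr i, ∀ y ∈ gr j, ∀ z ∈ gr k,
    c (c x y) (α z) = sg j k • c (c x z) (α y))

/-- A super Hom-Gel'fand-Dorfman bialgebra structure on the superspace `(A, gr)`. -/
def SuperHomGD (gr : ZMod 2 → Submodule ℂ A) (br c : A →ₗ[ℂ] A →ₗ[ℂ] A)
    (α : A →ₗ[ℂ] A) : Prop :=
  HomLieSuper gr br α ∧ HomNovikovSuper gr c α ∧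
  (∀ (i j k : ZMod 2), ∀ x ∈ gr i, ∀ y ∈ gr j, ∀ z ∈ gr k,
    br (c x y) (α z) - sg j k • br (c x z) (α y) + c (br x y) (α z)
      - sg j k • c (br x z) (α y) - c (α x) (br y z) = 0)

/-- A Lie superalgebra structure on the superspace `(A, gr)`. -/
def LieSuper (gr : ZMod 2 → Submodule ℂ A) (br : A →ₗ[ℂ] A →ₗ[ℂ] A) : Prop :=
  EvenBilin gr br ∧
  (∀ (i j : ZMod 2), ∀ x ∈ gr i, ∀ y ∈ gr j, br x y = -(sg i j • br y x)) ∧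
  (∀ (i j k : ZMod 2), ∀ x ∈ gr i, ∀ y ∈ gr j, ∀ z ∈ gr k,
    sg i k • br (br x y) z + sg i j • br (br y z) x + sg j k • br (br z x) y = 0)

/-- A Novikov superalgebra structure on the superspace `(A, gr)`. -/
def NovikovSuper (gr : ZMod 2 → Submodule ℂ A) (c : A →ₗ[ℂ] A →ₗ[ℂ] A) : Prop :=
  EvenBilin gr c ∧
  (∀ (i j k : ZMod 2), ∀ x ∈ gr i, ∀ y ∈ gr j, ∀ z ∈ gr k,
    c (c x y) z - c x (c y z) = sg i j • (c (c y x) z - c y (c x z))) ∧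
  (∀ (i j k : ZMod 2), ∀ x ∈ gr i, ∀ y ∈ gr j, ∀ z ∈ gr k,
    c (c x y) z = sg j k • c (c x z) y)

/-- A super Gel'fand-Dorfman bialgebra structure on the superspace `(A, gr)`. -/
def SuperGD (gr : ZMod 2 → Submodule ℂ A) (br c : A →ₗ[ℂ] A →ₗ[ℂ] A) : Prop :=
  LieSuper gr br ∧ NovikovSuper gr c ∧
  (∀ (i j k : ZMod 2), ∀ x ∈ gr i, ∀ y ∈ gr j, ∀ z ∈ gr k,
    br (c x y) z - sg j k • br (c x z) y + c (br x y) z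
      - sg j k • c (br x z) y - c x (br y z) = 0)


/-! The twisted identities for `(x, y, z)` are the original ones for `(α² x, α² y, α² z)`,
because `α` is multiplicative for both operations. -/

variable {gr : ZMod 2 → Submodule ℂ A} {α : A →ₗ[ℂ] A}

theorem EvenLin.comp {f g : A →ₗ[ℂ] A} (hf : EvenLin gr f) (hg : EvenLin gr g) :
    EvenLin gr (f ∘ₗ g) :=
  fun i x hx => hf i _ (hg i x hx)

theorem EvenBilin.compl₁₂ {m : A →ₗ[ℂ] A →ₗ[ℂ] A} (hm : EvenBilin gr m)
    {f g : A →ₗ[ℂ] A} (hf : EvenLin gr f) (hg : EvenLin gr g) :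
    EvenBilin gr (m.compl₁₂ f g) :=
  fun i j x hx y hy => hm i j _ (hf i x hx) _ (hg j y hy)

theorem LieSuper.homLieSuper_compl₁₂ {br : A →ₗ[ℂ] A →ₗ[ℂ] A} (h : LieSuper gr br)
    (hα : EvenLin gr α) (hhom : ∀ x y : A, α (br x y) = br (α x) (α y)) :
    HomLieSuper gr (br.compl₁₂ α α) α := by
  obtain ⟨heven, hanti, hjacobi⟩ := h
  have hα2 := hα.comp hα
  refine ⟨hα, heven.compl₁₂ hα hα, fun i j x hx y hy => ?_,
    fun i j k x hx y hy z hz => ?_⟩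
  · exact hanti i j _ (hα i x hx) _ (hα j y hy)
  · simp only [LinearMap.compl₁₂_apply, hhom]
    exact hjacobi i j k _ (hα2 i x hx) _ (hα2 j y hy) _ (hα2 k z hz)

theorem NovikovSuper.homNovikovSuper_compl₁₂ {c : A →ₗ[ℂ] A →ₗ[ℂ] A}
    (h : NovikovSuper gr c) (hα : EvenLin gr α)
    (hhom : ∀ x y : A, α (c x y) = c (α x) (α y)) :
    HomNovikovSuper gr (c.compl₁₂ α α) α := by
  obtain ⟨heven, hleftSym, hrightComm⟩ := h
  have hα2 := hα.comp hα
  refine ⟨hα, heven.compl₁₂ hα hα, fun i j k x hx y hy z hz => ?_,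
    fun i j k x hx y hy z hz => ?_⟩
  · simp only [LinearMap.compl₁₂_apply, hhom]
    exact hleftSym i j k _ (hα2 i x hx) _ (hα2 j y hy) _ (hα2 k z hz)
  · simp only [LinearMap.compl₁₂_apply, hhom]
    exact hrightComm i j k _ (hα2 i x hx) _ (hα2 j y hy) _ (hα2 k z hz)

theorem SuperGD.homCompatibility_compl₁₂ {br c : A →ₗ[ℂ] A →ₗ[ℂ] A}
    (h : SuperGD gr br c) (hα : EvenLin gr α)
    (hhom₁ : ∀ x y : A, α (br x y) = br (α x) (α y))
    (hhom₂ : ∀ x y : A, α (c x y) = c (α x) (α y))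
    (i j k : ZMod 2) (x : A) (hx : x ∈ gr i) (y : A) (hy : y ∈ gr j) (z : A) (hz : z ∈ gr k) :
    br.compl₁₂ α α (c.compl₁₂ α α x y) (α z)
      - sg j k • br.compl₁₂ α α (c.compl₁₂ α α x z) (α y)
      + c.compl₁₂ α α (br.compl₁₂ α α x y) (α z)
      - sg j k • c.compl₁₂ α α (br.compl₁₂ α α x z) (α y)
      - c.compl₁₂ α α (α x) (br.compl₁₂ α α y z) = 0 := by
  have hα2 := hα.comp hα
  simp only [LinearMap.compl₁₂_apply, hhom₁, hhom₂]
  exact h.2.2 i j k _ (hα2 i x hx) _ (hα2 j y hy) _ (hα2 k z hz)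

theorem superHomGD_of_superGD_endo_general
    {A : Type*} [AddCommGroup A] [Module ℂ A]
    (gr : ZMod 2 → Submodule ℂ A)
    (br c : A →ₗ[ℂ] A →ₗ[ℂ] A) (hGD : SuperGD gr br c)
    (α : A →ₗ[ℂ] A) (hα : EvenLin gr α)
    (hhom₁ : ∀ x y : A, α (br x y) = br (α x) (α y))
    (hhom₂ : ∀ x y : A, α (c x y) = c (α x) (α y)) :
    SuperHomGD gr (br.compl₁₂ α α) (c.compl₁₂ α α) α :=
  ⟨hGD.1.homLieSuper_compl₁₂ hα hhom₁, hGD.2.1.homNovikovSuper_compl₁₂ hα hhom₂,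
    hGD.homCompatibility_compl₁₂ hα hhom₁ hhom₂⟩

/-- If `(A, [·,·], ∘)` is a super Gel'fand-Dorfman bialgebra with an
even algebra endomorphism `α` of both operations, then with `x ∘_α y = α(x)∘α(y)` and
`[x,y]_α = [α(x),α(y)]`, `(A, [·,·]_α, ∘_α, α)` is a super Hom-Gel'fand-Dorfman
bialgebra. -/
theorem superHomGD_of_superGD_endo
    {A : Type*} [AddCommGroup A] [Module ℂ A]
    (gr : ZMod 2 → Submodule ℂ A) (hgr : IsSupergrading gr)
    (br c : A →ₗ[ℂ] A →ₗ[ℂ] A) (hGD : SuperGD gr br c)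
    (α : A →ₗ[ℂ] A) (hα : EvenLin gr α)
    (hhom₁ : ∀ x y : A, α (br x y) = br (α x) (α y))
    (hhom₂ : ∀ x y : A, α (c x y) = c (α x) (α y)) :
    SuperHomGD gr (br.compl₁₂ α α) (c.compl₁₂ α α) α :=
  superHomGD_of_superGD_endo_general gr br c hGD α hα hhom₁ hhom₂

end
end

section
/- Let (A,·,α) be a commutative Hom-associative superalgebra with an even derivation D of (A,·) such that αD = Dα, and let λ ∈ ℂ be fixed. Define x∘y = x·D(y) + λ x·y. Then (A, ∘, α) is a Hom-Novikov superalgebra. -/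
/-!
With `x ∘ y = x·Dy + λ x·y`, expanding by the Leibniz rule and Hom-associativity (using
`αD = Dα`) reduces the Hom-associator of `∘` to `-αx·(y·(D²z + λ Dz))`, which is
supersymmetric in `x, y` because `αx·(y·w) = ± αy·(x·w)`. The second Novikov identity holds
term by term, from `(x·y)·αz = ± (x·z)·αy` and the evenness of `D`.
-/

noncomputable section

variable {A : Type*} [AddCommGroup A] [Module ℂ A]

/-- A commutative Hom-associative superalgebra structure on the superspace `(A, gr)`. -/
def CommHomAssocSuper {A : Type*} [AddCommGroup A] [Module ℂ A]
    (gr : ZMod 2 → Submodule ℂ A) (m : A →ₗ[ℂ] A →ₗ[ℂ] A) (α : A →ₗ[ℂ] A) : Prop :=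
  EvenLin gr α ∧ EvenBilin gr m ∧
  (∀ (i j : ZMod 2), ∀ x ∈ gr i, ∀ y ∈ gr j, m x y = sg i j • m y x) ∧
  (∀ (i j k : ZMod 2), ∀ x ∈ gr i, ∀ y ∈ gr j, ∀ z ∈ gr k,
    m (α x) (m y z) = m (m x y) (α z))

/-- `D` is a derivation of the (bilinear) product `m`. -/
def IsDer {A : Type*} [AddCommGroup A] [Module ℂ A]
    (m : A →ₗ[ℂ] A →ₗ[ℂ] A) (D : A →ₗ[ℂ] A) : Prop :=
  ∀ x y : A, D (m x y) = m (D x) y + m x (D y)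
theorem EvenBilin.add {gr : ZMod 2 → Submodule ℂ A} {m n : A →ₗ[ℂ] A →ₗ[ℂ] A}
    (hm : EvenBilin gr m) (hn : EvenBilin gr n) : EvenBilin gr (m + n) :=
  fun i j x hx y hy => add_mem (hm i j x hx y hy) (hn i j x hx y hy)

theorem EvenBilin.smul {gr : ZMod 2 → Submodule ℂ A} {m : A →ₗ[ℂ] A →ₗ[ℂ] A}
    (hm : EvenBilin gr m) (c : ℂ) : EvenBilin gr (c • m) :=
  fun i j x hx y hy => Submodule.smul_mem _ c (hm i j x hx y hy)

theorem EvenBilin.compl₂ {gr : ZMod 2 → Submodule ℂ A} {m : A →ₗ[ℂ] A →ₗ[ℂ] A}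
    {D : A →ₗ[ℂ] A} (hm : EvenBilin gr m) (hD : EvenLin gr D) :
    EvenBilin gr (m.compl₂ D) :=
  fun i j x hx y hy => hm i j x hx (D y) (hD j y hy)

abbrev novikovProduct (m : A →ₗ[ℂ] A →ₗ[ℂ] A) (D : A →ₗ[ℂ] A) (lam : ℂ) :
    A →ₗ[ℂ] A →ₗ[ℂ] A :=
  m.compl₂ D + lam • m

namespace CommHomAssocSuper

variable {gr : ZMod 2 → Submodule ℂ A} {m : A →ₗ[ℂ] A →ₗ[ℂ] A} {α : A →ₗ[ℂ] A}
  {i j k : ZMod 2} {x y z : A}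

theorem right_comm (hm : CommHomAssocSuper gr m α)
    (hx : x ∈ gr i) (hy : y ∈ gr j) (hz : z ∈ gr k) :
    m (m x y) (α z) = sg j k • m (m x z) (α y) := by
  rw [← hm.2.2.2 i j k x hx y hy z hz, hm.2.2.1 j k y hy z hz, map_smul,
    hm.2.2.2 i k j x hx z hz y hy]

theorem left_comm (hm : CommHomAssocSuper gr m α)
    (hx : x ∈ gr i) (hy : y ∈ gr j) (hz : z ∈ gr k) :
    m (α x) (m y z) = sg i j • m (α y) (m x z) := by
  rw [hm.2.2.2 i j k x hx y hy z hz, hm.2.2.1 i j x hx y hy, map_smul,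
    LinearMap.smul_apply, ← hm.2.2.2 j i k y hy x hx z hz]

variable {D : A →ₗ[ℂ] A} {lam : ℂ}

local notation:70 x:70 " ⋄ " y:71 => novikovProduct m D lam x y

theorem homAssociator_novikovProduct (hm : CommHomAssocSuper gr m α) (hDeven : EvenLin gr D)
    (hD : IsDer m D) (hcomm : ∀ x : A, α (D x) = D (α x))
    (hx : x ∈ gr i) (hy : y ∈ gr j) (hz : z ∈ gr k) :
    (x ⋄ y) ⋄ α z - α x ⋄ (y ⋄ z) =
      -(m (α x) (m y (D (D z))) + lam • m (α x) (m y (D z))) := by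
  have hDy := hDeven j y hy
  have hDz := hDeven k z hz
  have assoc := hm.2.2.2 i
  simp only [novikovProduct, LinearMap.add_apply, LinearMap.compl₂_apply, map_add, map_smul,
    LinearMap.smul_apply, ← hcomm, hD y]
  rw [assoc j k x hx _ hDy _ hDz, assoc j k x hx _ hy _ hDz, assoc j k x hx _ hDy _ hz,
    assoc j k x hx _ hy _ hz]
  module

theorem novikovProduct_left_symm (hm : CommHomAssocSuper gr m α)
    (hDeven : EvenLin gr D) (hD : IsDer m D) (hcomm : ∀ x : A, α (D x) = D (α x))
    (hx : x ∈ gr i) (hy : y ∈ gr j) (hz : z ∈ gr k) :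
    (x ⋄ y) ⋄ α z - α x ⋄ (y ⋄ z) = sg i j • ((y ⋄ x) ⋄ α z - α y ⋄ (x ⋄ z)) := by
  have hDz := hDeven k z hz
  rw [homAssociator_novikovProduct hm hDeven hD hcomm hx hy hz,
    homAssociator_novikovProduct hm hDeven hD hcomm hy hx hz,
    hm.left_comm hx hy (hDeven k _ hDz), hm.left_comm hx hy hDz]
  module

theorem novikovProduct_right_comm (hm : CommHomAssocSuper gr m α)
    (hDeven : EvenLin gr D) (hcomm : ∀ x : A, α (D x) = D (α x))
    (hx : x ∈ gr i) (hy : y ∈ gr j) (hz : z ∈ gr k) :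
    (x ⋄ y) ⋄ α z = sg j k • ((x ⋄ z) ⋄ α y) := by
  have hDy := hDeven j y hy
  have hDz := hDeven k z hz
  simp only [novikovProduct, LinearMap.add_apply, LinearMap.compl₂_apply, map_add, map_smul,
    LinearMap.smul_apply, ← hcomm]
  rw [hm.right_comm hx hDy hDz, hm.right_comm hx hy hDz, hm.right_comm hx hDy hz,
    hm.right_comm hx hy hz]
  module

end CommHomAssocSuper

theorem homNovikovSuper_of_commHomAssoc_general
    {A : Type*} [AddCommGroup A] [Module ℂ A]
    (gr : ZMod 2 → Submodule ℂ A)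
    (m : A →ₗ[ℂ] A →ₗ[ℂ] A) (α : A →ₗ[ℂ] A)
    (hm : CommHomAssocSuper gr m α)
    (D : A →ₗ[ℂ] A) (hDeven : EvenLin gr D) (hD : IsDer m D)
    (hcomm : ∀ x : A, α (D x) = D (α x)) (lam : ℂ) :
    HomNovikovSuper gr (m.compl₂ D + lam • m) α :=
  ⟨hm.1, (hm.2.1.compl₂ hDeven).add (hm.2.1.smul lam),
    fun _ _ _ _ hx _ hy _ hz => hm.novikovProduct_left_symm hDeven hD hcomm hx hy hz,
    fun _ _ _ _ hx _ hy _ hz => hm.novikovProduct_right_comm hDeven hcomm hx hy hz⟩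

/-- If `(A, ·, α)` is a commutative Hom-associative superalgebra with an
even derivation `D` commuting with `α` and `λ ∈ ℂ`, then `x∘y = x·D(y) + λ x·y` makes
`(A, ∘, α)` a Hom-Novikov superalgebra. -/
theorem homNovikovSuper_of_commHomAssoc
    {A : Type*} [AddCommGroup A] [Module ℂ A]
    (gr : ZMod 2 → Submodule ℂ A) (hgr : IsSupergrading gr)
    (m : A →ₗ[ℂ] A →ₗ[ℂ] A) (α : A →ₗ[ℂ] A)
    (hm : CommHomAssocSuper gr m α)
    (D : A →ₗ[ℂ] A) (hDeven : EvenLin gr D) (hD : IsDer m D)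
    (hcomm : ∀ x : A, α (D x) = D (α x)) (lam : ℂ) :
    HomNovikovSuper gr (m.compl₂ D + lam • m) α :=
  homNovikovSuper_of_commHomAssoc_general gr m α hm D hDeven hD hcomm lam

end
end

section
/- Let (A,·,α) be a commutative Hom-associative superalgebra with an even derivation D of (A,·) such that αD = Dα, and let λ ∈ ℂ be fixed. Define x∘y = x·D(y) + λ x·y and, on homogeneous elements, [x,y]⁻ = x·D(y) − (−1)^{|x||y|} y·D(x). Then (A, [·,·]⁻, ∘, α) is a super Hom-Gel'fand-Dorfman bialgebra. -/
noncomputable section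

variable {A : Type*} [AddCommGroup A] [Module ℂ A]

/-! The bracket is the super-Wronskian `x·D(y) − D(x)·y`, which needs no signs, and `x∘y = x·E(y)`
with `E = D + λ`. In a commutative Hom-associative superalgebra the triple product
`T(x,y,z) = (x·y)·α(z)` is supersymmetric, so `sg |x| |z| • T(x,y,z)` is invariant under cyclic
permutations. After expanding with the Leibniz rule and Hom-associativity, every axiom becomes a
combination of triple products whose terms cancel in pairs by these symmetries. -/

lemma sg_symm (i j : ZMod 2) : sg i j = sg j i := by
  rw [sg, sg, Nat.mul_comm]

lemma sg_smul_sg_smul (i j : ZMod 2) (v : A) : sg i j • sg i j • v = v := by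
  rw [smul_smul, sg, ← mul_pow]
  norm_num

namespace CommHomAssocSuper

variable {gr : ZMod 2 → Submodule ℂ A} {m : A →ₗ[ℂ] A →ₗ[ℂ] A} {α : A →ₗ[ℂ] A}
  (hm : CommHomAssocSuper gr m α) {i j k : ZMod 2} {x y z : A}
include hm

protected lemma mul_comm (hx : x ∈ gr i) (hy : y ∈ gr j) : m x y = sg i j • m y x :=
  hm.2.2.1 i j x hx y hy

lemma hom_assoc (hx : x ∈ gr i) (hy : y ∈ gr j) (hz : z ∈ gr k) :
    m (α x) (m y z) = m (m x y) (α z) :=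
  hm.2.2.2 i j k x hx y hy z hz

lemma mul_mul_swap_left (hx : x ∈ gr i) (hy : y ∈ gr j) (w : A) :
    m (m y x) w = sg i j • m (m x y) w := by
  rw [hm.mul_comm hy hx, map_smul, LinearMap.smul_apply, sg_symm]

lemma mul_mul_alpha_swap_right (hx : x ∈ gr i) (hy : y ∈ gr j) (hz : z ∈ gr k) :
    m (m x z) (α y) = sg j k • m (m x y) (α z) := by
  rw [← hm.hom_assoc hx hz hy, hm.mul_comm hz hy, map_smul, hm.hom_assoc hx hy hz, sg_symm]

lemma mul_mul_alpha_cycle (hx : x ∈ gr i) (hy : y ∈ gr j) (hz : z ∈ gr k) :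
    sg j i • m (m y z) (α x) = sg i k • m (m x y) (α z) := by
  have h := hm.mul_mul_alpha_swap_right hy hx hz
  rw [hm.mul_mul_swap_left hx hy] at h
  rw [h, sg_symm j i, smul_comm (sg i k) (sg i j), sg_smul_sg_smul]

lemma sub_sg_smul_mul_eq {D : A →ₗ[ℂ] A} (hD : EvenLin gr D) (hx : x ∈ gr i) (hy : y ∈ gr j) :
    m x (D y) - sg i j • m y (D x) = m x (D y) - m (D x) y := by
  rw [hm.mul_comm hy (hD i x hx), sg_symm j i, sg_smul_sg_smul]

end CommHomAssocSuper

lemma EvenLin.add_smul_id {gr : ZMod 2 → Submodule ℂ A} {D : A →ₗ[ℂ] A} (hD : EvenLin gr D)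
    (lam : ℂ) : EvenLin gr (D + lam • LinearMap.id) :=
  fun i x hx => (gr i).add_mem (hD i x hx) ((gr i).smul_mem lam hx)

lemma IsDer.add_smul_id_apply {m : A →ₗ[ℂ] A →ₗ[ℂ] A} {D : A →ₗ[ℂ] A} (hD : IsDer m D)
    (lam : ℂ) (a b : A) :
    (D + lam • LinearMap.id : A →ₗ[ℂ] A) (m a b) =
      m ((D + lam • LinearMap.id : A →ₗ[ℂ] A) a) b + m a (D b) := by
  simp only [LinearMap.add_apply, LinearMap.smul_apply, LinearMap.id_apply, hD a b, map_add,
    map_smul]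
  abel

def wronskian (m : A →ₗ[ℂ] A →ₗ[ℂ] A) (D : A →ₗ[ℂ] A) : A →ₗ[ℂ] A →ₗ[ℂ] A :=
  m.compl₂ D - m.comp D

@[simp]
lemma wronskian_apply (m : A →ₗ[ℂ] A →ₗ[ℂ] A) (D : A →ₗ[ℂ] A) (x y : A) :
    wronskian m D x y = m x (D y) - m (D x) y := rfl

lemma wronskian_wronskian_alpha {m : A →ₗ[ℂ] A →ₗ[ℂ] A} {D α : A →ₗ[ℂ] A} (hD : IsDer m D)
    (hcomm : ∀ x : A, α (D x) = D (α x)) (x y z : A) :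
    wronskian m D (wronskian m D x y) (α z) =
      m (m x (D y)) (α (D z)) - m (m (D x) y) (α (D z))
        - m (m x (D (D y))) (α z) + m (m (D (D x)) y) (α z) := by
  simp only [wronskian_apply, map_sub, map_add, LinearMap.sub_apply, LinearMap.add_apply, hD _ _,
    ← hcomm]
  abel

lemma SuperHomGD.of_homogeneous_bracket_eq {gr : ZMod 2 → Submodule ℂ A}
    {br br' c : A →ₗ[ℂ] A →ₗ[ℂ] A} {α : A →ₗ[ℂ] A} (h : SuperHomGD gr br' c α)
    (hbr : ∀ (i j : ZMod 2), ∀ x ∈ gr i, ∀ y ∈ gr j, br x y = br' x y) :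
    SuperHomGD gr br c α := by
  obtain ⟨⟨hα, hbr'_even, hskew, hjacobi⟩, hnov, hcompat⟩ := h
  have hbr_br : ∀ (i j k : ZMod 2), ∀ x ∈ gr i, ∀ y ∈ gr j, ∀ z ∈ gr k,
      br (br x y) (α z) = br' (br' x y) (α z) := fun i j k x hx y hy z hz => by
    rw [hbr i j x hx y hy, hbr _ k _ (hbr'_even i j x hx y hy) _ (hα k z hz)]
  refine ⟨⟨hα, fun i j x hx y hy => ?_, fun i j x hx y hy => ?_, fun i j k x hx y hy z hz => ?_⟩,
    hnov, fun i j k x hx y hy z hz => ?_⟩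
  · exact hbr i j x hx y hy ▸ hbr'_even i j x hx y hy
  · rw [hbr i j x hx y hy, hbr j i y hy x hx]
    exact hskew i j x hx y hy
  · rw [hbr_br i j k x hx y hy z hz, hbr_br j k i y hy z hz x hx, hbr_br k i j z hz x hx y hy]
    exact hjacobi i j k x hx y hy z hz
  · have hc := hnov.2.1
    rw [hbr _ k _ (hc i j x hx y hy) _ (hα k z hz), hbr _ j _ (hc i k x hx z hz) _ (hα j y hy),
      hbr i j x hx y hy, hbr i k x hx z hz, hbr j k y hy z hz]
    exact hcompat i j k x hx y hy z hz

section

variable {gr : ZMod 2 → Submodule ℂ A} {m : A →ₗ[ℂ] A →ₗ[ℂ] A} {α : A →ₗ[ℂ] A}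
  (hm : CommHomAssocSuper gr m α)
include hm

/-- The Leibniz-type hypothesis `hEm` holds for `E = D + λ` and `F = D` when `D` is a derivation. -/
lemma homNovikovSuper_compl₂ {E F : A →ₗ[ℂ] A} (hE : EvenLin gr E) (hEα : ∀ x, α (E x) = E (α x))
    (hF : EvenLin gr F) (hEm : ∀ a b, E (m a b) = m (E a) b + m a (F b)) :
    HomNovikovSuper gr (m.compl₂ E) α := by
  have hassociator : ∀ (i j k : ZMod 2), ∀ x ∈ gr i, ∀ y ∈ gr j, ∀ z ∈ gr k,
      m (m x (E y)) (E (α z)) - m (α x) (E (m y (E z))) = -m (m x y) (α (F (E z))) := by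
    intro i j k x hx y hy z hz
    rw [← hEα, hEm, map_add, hm.hom_assoc hx (hE j y hy) (hE k z hz),
      hm.hom_assoc hx hy (hF k _ (hE k z hz))]
    abel
  refine ⟨hm.1, fun i j x hx y hy => hm.2.1 i j x hx _ (hE j y hy), ?_, ?_⟩
  · intro i j k x hx y hy z hz
    simp only [LinearMap.compl₂_apply]
    rw [hassociator i j k x hx y hy z hz, hassociator j i k y hy x hx z hz,
      hm.mul_mul_swap_left hx hy, smul_neg, sg_smul_sg_smul]
  · intro i j k x hx y hy z hz
    simp only [LinearMap.compl₂_apply, ← hEα]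
    rw [hm.mul_mul_alpha_swap_right hx (hE j y hy) (hE k z hz), sg_smul_sg_smul]

variable {D : A →ₗ[ℂ] A} (hDeven : EvenLin gr D) (hD : IsDer m D)
  (hcomm : ∀ x : A, α (D x) = D (α x))
include hDeven hD hcomm

lemma homLieSuper_wronskian : HomLieSuper gr (wronskian m D) α := by
  refine ⟨hm.1, fun i j x hx y hy => ?_, fun i j x hx y hy => ?_, fun i j k x hx y hy z hz => ?_⟩
  · exact (gr _).sub_mem (hm.2.1 i j x hx _ (hDeven j y hy)) (hm.2.1 i j _ (hDeven i x hx) y hy)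
  · rw [wronskian_apply, wronskian_apply, hm.mul_comm hy (hDeven i x hx),
      hm.mul_comm (hDeven j y hy) hx, sg_symm j i, smul_sub, sg_smul_sg_smul, sg_smul_sg_smul]
    abel
  · have hDx := hDeven i x hx; have hDy := hDeven j y hy; have hDz := hDeven k z hz
    simp only [wronskian_wronskian_alpha hD hcomm, smul_add, smul_sub]
    -- move each term onto the cyclic rotation that cancels it
    rw [sg_symm i j, sg_symm j k, ← hm.mul_mul_alpha_cycle hDz hx hDy,
      hm.mul_mul_alpha_cycle hDx hy hDz, hm.mul_mul_alpha_cycle hx (hDeven j _ hDy) hz,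
      ← hm.mul_mul_alpha_cycle hz (hDeven i _ hDx) hy, hm.mul_mul_alpha_cycle hDy hz hDx,
      hm.mul_mul_alpha_cycle hy (hDeven k _ hDz) hx]
    abel

theorem superHomGD_wronskian_compl₂ (lam : ℂ) :
    SuperHomGD gr (wronskian m D) (m.compl₂ (D + lam • LinearMap.id)) α := by
  have hE := hDeven.add_smul_id lam
  have hEm := hD.add_smul_id_apply lam
  have hEα : ∀ x, α ((D + lam • LinearMap.id : A →ₗ[ℂ] A) x) =
      (D + lam • LinearMap.id : A →ₗ[ℂ] A) (α x) := by
    simp [hcomm]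
  set E : A →ₗ[ℂ] A := D + lam • LinearMap.id with hE_def
  refine ⟨homLieSuper_wronskian hm hDeven hD hcomm, homNovikovSuper_compl₂ hm hE hEα hDeven hEm,
    fun i j k x hx y hy z hz => ?_⟩
  have hDx := hDeven i x hx; have hDy := hDeven j y hy; have hDz := hDeven k z hz
  simp only [wronskian_apply, LinearMap.compl₂_apply, map_sub, map_add, LinearMap.sub_apply,
    LinearMap.add_apply, hD _ _, hEm, ← hcomm, ← hEα, smul_sub, smul_add]
  rw [hm.hom_assoc hx (hE j y hy) hDz, hm.hom_assoc hx hy (hDeven k _ hDz),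
    hm.hom_assoc hx (hE j _ hDy) hz, hm.hom_assoc hx hDy hDz,
    hm.mul_mul_alpha_swap_right hx hDy (hE k z hz), hm.mul_mul_alpha_swap_right hDx hy (hE k z hz),
    hm.mul_mul_alpha_swap_right hx hy (hDeven k _ (hE k z hz)),
    hm.mul_mul_alpha_swap_right hx (hE j y hy) hDz, hm.mul_mul_alpha_swap_right hDx (hE j y hy) hz]
  -- what is left cancels only once `E` is unfolded to `D + λ`
  simp only [sg_smul_sg_smul, hE_def, LinearMap.add_apply, LinearMap.smul_apply,
    LinearMap.id_apply, map_add, map_smul]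
  module

end

theorem superHomGD_of_commHomAssoc_general
    {A : Type*} [AddCommGroup A] [Module ℂ A]
    (gr : ZMod 2 → Submodule ℂ A)
    (m : A →ₗ[ℂ] A →ₗ[ℂ] A) (α : A →ₗ[ℂ] A)
    (hm : CommHomAssocSuper gr m α)
    (D : A →ₗ[ℂ] A) (hDeven : EvenLin gr D) (hD : IsDer m D)
    (hcomm : ∀ x : A, α (D x) = D (α x)) (lam : ℂ)
    (br : A →ₗ[ℂ] A →ₗ[ℂ] A)
    (hbr : ∀ (i j : ZMod 2), ∀ x ∈ gr i, ∀ y ∈ gr j,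
      br x y = m x (D y) - sg i j • m y (D x)) :
    SuperHomGD gr br (m.compl₂ D + lam • m) α := by
  have hcirc : m.compl₂ D + lam • m = m.compl₂ (D + lam • LinearMap.id) := by
    ext; simp
  rw [hcirc]
  refine (superHomGD_wronskian_compl₂ hm hDeven hD hcomm lam).of_homogeneous_bracket_eq
    fun i j x hx y hy => ?_
  rw [hbr i j x hx y hy, hm.sub_sg_smul_mul_eq hDeven hx hy, wronskian_apply]

/-- If `(A, ·, α)` is a commutative Hom-associative superalgebra with an
even derivation `D` commuting with `α` and `λ ∈ ℂ`, then with `x∘y = x·D(y) + λ x·y` and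
`[x,y]⁻ = x·D(y) − (−1)^{|x||y|} y·D(x)` (on homogeneous elements),
`(A, [·,·]⁻, ∘, α)` is a super Hom-Gel'fand-Dorfman bialgebra. -/
theorem superHomGD_of_commHomAssoc
    {A : Type*} [AddCommGroup A] [Module ℂ A]
    (gr : ZMod 2 → Submodule ℂ A) (hgr : IsSupergrading gr)
    (m : A →ₗ[ℂ] A →ₗ[ℂ] A) (α : A →ₗ[ℂ] A)
    (hm : CommHomAssocSuper gr m α)
    (D : A →ₗ[ℂ] A) (hDeven : EvenLin gr D) (hD : IsDer m D)
    (hcomm : ∀ x : A, α (D x) = D (α x)) (lam : ℂ)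
    (br : A →ₗ[ℂ] A →ₗ[ℂ] A)
    (hbr : ∀ (i j : ZMod 2), ∀ x ∈ gr i, ∀ y ∈ gr j,
      br x y = m x (D y) - sg i j • m y (D x)) :
    SuperHomGD gr br (m.compl₂ D + lam • m) α :=
  superHomGD_of_commHomAssoc_general gr m α hm D hDeven hD hcomm lam br hbr

end
end

section
/- Let (A,·) be a commutative associative superalgebra equipped with an even algebra endomorphism α and an even derivation D satisfying Dα = αD, and let λ ∈ ℂ be fixed. Define x∘y = α(x·D(y)) + λ α(x·y) and, on homogeneous elements, [x,y]⁻ = α(x·D(y)) − (−1)^{|x||y|} α(y·D(x)). Then (A, [·,·]⁻, ∘, α) is a super Hom-Gel'fand-Dorfman bialgebra. -/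
/-!
`x ∘ y = x·D(y) + λ x·y` is a Novikov product on `A`, and `[·,·]⁻` is its super-commutator
(the `λ`-terms cancel by super-commutativity). Composing a Novikov product with a multiplicative
`α` gives a Hom-Novikov product (Yau twist). The super-commutator of any Hom-Novikov
superalgebra is Hom-Lie and satisfies the Gel'fand-Dorfman compatibility, because the Hom-Jacobi
and compatibility expressions are signed sums of instances of the Hom-Novikov identities.
-/

noncomputable section

variable {A : Type*} [AddCommGroup A] [Module ℂ A]

/-- A commutative associative superalgebra structure on the superspace `(A, gr)`. -/
def CommAssocSuper {A : Type*} [AddCommGroup A] [Module ℂ A]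
    (gr : ZMod 2 → Submodule ℂ A) (m : A →ₗ[ℂ] A →ₗ[ℂ] A) : Prop :=
  EvenBilin gr m ∧
  (∀ (i j : ZMod 2), ∀ x ∈ gr i, ∀ y ∈ gr j, m x y = sg i j • m y x) ∧
  (∀ (i j k : ZMod 2), ∀ x ∈ gr i, ∀ y ∈ gr j, ∀ z ∈ gr k,
    m (m x y) z = m x (m y z))

lemma ZMod.two_cases : ∀ i : ZMod 2, i = 0 ∨ i = 1 := by decide

@[simp] lemma sg_zero_left (j : ZMod 2) : sg 0 j = 1 := by simp [sg]
@[simp] lemma sg_zero_right (i : ZMod 2) : sg i 0 = 1 := by simp [sg]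
@[simp] lemma sg_one_one : sg 1 1 = -1 := by simp [sg, ZMod.val_one]

@[simp] lemma sg_add_left (i j k : ZMod 2) : sg (i + j) k = sg i k * sg j k := by
  rcases ZMod.two_cases i with rfl | rfl <;> rcases ZMod.two_cases j with rfl | rfl <;>
    rcases ZMod.two_cases k with rfl | rfl <;> simp [show (1 + 1 : ZMod 2) = 0 from rfl]

def HomPreLieSuper (gr : ZMod 2 → Submodule ℂ A) (c : A →ₗ[ℂ] A →ₗ[ℂ] A)
    (α : A →ₗ[ℂ] A) : Prop :=
  EvenLin gr α ∧ EvenBilin gr c ∧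
  (∀ (i j k : ZMod 2), ∀ x ∈ gr i, ∀ y ∈ gr j, ∀ z ∈ gr k,
    c (c x y) (α z) - c (α x) (c y z) = sg i j • (c (c y x) (α z) - c (α y) (c x z)))

theorem HomNovikovSuper.homPreLieSuper {gr : ZMod 2 → Submodule ℂ A} {c : A →ₗ[ℂ] A →ₗ[ℂ] A}
    {α : A →ₗ[ℂ] A} (h : HomNovikovSuper gr c α) : HomPreLieSuper gr c α :=
  ⟨h.1, h.2.1, h.2.2.1⟩

section SuperCommutator

variable {gr : ZMod 2 → Submodule ℂ A} {c br : A →ₗ[ℂ] A →ₗ[ℂ] A} {α : A →ₗ[ℂ] A}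

theorem evenBilin_superCommutator (hc : EvenBilin gr c)
    (hbr : ∀ (i j : ZMod 2), ∀ x ∈ gr i, ∀ y ∈ gr j, br x y = c x y - sg i j • c y x) :
    EvenBilin gr br := by
  intro i j x hx y hy
  rw [hbr i j x hx y hy]
  exact sub_mem (hc i j x hx y hy) (Submodule.smul_mem _ _ (add_comm i j ▸ hc j i y hy x hx))

theorem HomPreLieSuper.homLieSuper (h : HomPreLieSuper gr c α)
    (hbr : ∀ (i j : ZMod 2), ∀ x ∈ gr i, ∀ y ∈ gr j, br x y = c x y - sg i j • c y x) :
    HomLieSuper gr br α := by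
  obtain ⟨hα, hc, hls⟩ := h
  have hbrc := evenBilin_superCommutator hc hbr
  refine ⟨hα, hbrc, fun i j x hx y hy => ?_, fun i j k x hx y hy z hz => ?_⟩
  · rw [hbr i j x hx y hy, hbr j i y hy x hx]
    rcases ZMod.two_cases i with rfl | rfl <;> rcases ZMod.two_cases j with rfl | rfl <;>
      simp
  · rw [hbr _ _ _ (hbrc i j x hx y hy) _ (hα k z hz), hbr _ _ _ (hbrc j k y hy z hz) _ (hα i x hx),
      hbr _ _ _ (hbrc k i z hz x hx) _ (hα j y hy), hbr i j x hx y hy, hbr j k y hy z hz,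
      hbr k i z hz x hx]
    simp only [map_sub, map_smul, LinearMap.sub_apply, LinearMap.smul_apply]
    linear_combination (norm := skip) sg i k • hls i j k x hx y hy z hz +
      sg i j • hls j k i y hy z hz x hx + sg j k • hls k i j z hz x hx y hy
    rcases ZMod.two_cases i with rfl | rfl <;> rcases ZMod.two_cases j with rfl | rfl <;>
      rcases ZMod.two_cases k with rfl | rfl <;> simp <;> module

theorem HomNovikovSuper.superHomGD (h : HomNovikovSuper gr c α)
    (hbr : ∀ (i j : ZMod 2), ∀ x ∈ gr i, ∀ y ∈ gr j, br x y = c x y - sg i j • c y x) :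
    SuperHomGD gr br c α := by
  refine ⟨h.homPreLieSuper.homLieSuper hbr, h, fun i j k x hx y hy z hz => ?_⟩
  obtain ⟨hα, hc, hls, hrc⟩ := h
  rw [hbr _ _ _ (hc i j x hx y hy) _ (hα k z hz), hbr _ _ _ (hc i k x hx z hz) _ (hα j y hy),
    hbr i j x hx y hy, hbr i k x hx z hz, hbr j k y hy z hz]
  simp only [map_sub, map_smul, LinearMap.sub_apply, LinearMap.smul_apply]
  linear_combination (norm := skip) hrc i j k x hx y hy z hz + hls i j k x hx y hy z hz -
    sg j k • hls i k j x hx z hz y hy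
  rcases ZMod.two_cases i with rfl | rfl <;> rcases ZMod.two_cases j with rfl | rfl <;>
    rcases ZMod.two_cases k with rfl | rfl <;> simp <;> module

end SuperCommutator

theorem NovikovSuper.homNovikovSuper_compr₂ {gr : ZMod 2 → Submodule ℂ A}
    {c : A →ₗ[ℂ] A →ₗ[ℂ] A} {α : A →ₗ[ℂ] A} (h : NovikovSuper gr c) (hα : EvenLin gr α)
    (hαc : ∀ x y : A, α (c x y) = c (α x) (α y)) :
    HomNovikovSuper gr (c.compr₂ α) α := by
  obtain ⟨hc, hls, hrc⟩ := h
  have twist_left : ∀ x y z : A, c.compr₂ α (c.compr₂ α x y) (α z) = α (α (c (c x y) z)) := by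
    intro x y z
    simp only [LinearMap.compr₂_apply, hαc]
  have twist_right : ∀ x y z : A, c.compr₂ α (α x) (c.compr₂ α y z) = α (α (c x (c y z))) := by
    intro x y z
    simp only [LinearMap.compr₂_apply, hαc]
  refine ⟨hα, fun i j x hx y hy => hα _ _ (hc i j x hx y hy), fun i j k x hx y hy z hz => ?_,
    fun i j k x hx y hy z hz => ?_⟩
  · simp only [twist_left, twist_right, ← map_sub, hls i j k x hx y hy z hz, map_smul]
  · simp only [twist_left, hrc i j k x hx y hy z hz, map_smul]

def novikovProdOfDeriv (m : A →ₗ[ℂ] A →ₗ[ℂ] A) (D : A →ₗ[ℂ] A) (lam : ℂ) :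
    A →ₗ[ℂ] A →ₗ[ℂ] A :=
  m.compl₂ D + lam • m

@[simp] theorem novikovProdOfDeriv_apply (m : A →ₗ[ℂ] A →ₗ[ℂ] A) (D : A →ₗ[ℂ] A) (lam : ℂ)
    (x y : A) : novikovProdOfDeriv m D lam x y = m x (D y) + lam • m x y := rfl

namespace CommAssocSuper

variable {gr : ZMod 2 → Submodule ℂ A} {m : A →ₗ[ℂ] A →ₗ[ℂ] A}

theorem mul_left_comm (hm : CommAssocSuper gr m) {i j k : ZMod 2} {x y z : A} (hx : x ∈ gr i)
    (hy : y ∈ gr j) (hz : z ∈ gr k) : m x (m y z) = sg i j • m y (m x z) := by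
  rw [← hm.2.2 i j k x hx y hy z hz, hm.2.1 i j x hx y hy, map_smul, LinearMap.smul_apply,
    hm.2.2 j i k y hy x hx z hz]

variable {D : A →ₗ[ℂ] A}

theorem novikovSuper_derivation (hm : CommAssocSuper gr m) (hDeven : EvenLin gr D)
    (hD : IsDer m D) (lam : ℂ) : NovikovSuper gr (novikovProdOfDeriv m D lam) := by
  obtain ⟨hmE, hmC, hmA⟩ := id hm
  have hcc_left : ∀ (i j k : ZMod 2), ∀ x ∈ gr i, ∀ y ∈ gr j, ∀ z ∈ gr k,
      novikovProdOfDeriv m D lam (novikovProdOfDeriv m D lam x y) z = m x (m (D y) (D z)) +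
        lam • m x (m y (D z)) + lam • m x (m (D y) z) + (lam * lam) • m x (m y z) := by
    intro i j k x hx y hy z hz
    have hDy := hDeven j y hy; have hDz := hDeven k z hz
    simp only [novikovProdOfDeriv_apply, map_add, map_smul, LinearMap.add_apply,
      LinearMap.smul_apply, hmA i j k x hx (D y) hDy (D z) hDz, hmA i j k x hx y hy (D z) hDz,
      hmA i j k x hx (D y) hDy z hz, hmA i j k x hx y hy z hz]
    module
  have hcc_right : ∀ x y z : A,
      novikovProdOfDeriv m D lam x (novikovProdOfDeriv m D lam y z) = m x (m (D y) (D z)) +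
        m x (m y (D (D z))) + lam • m x (m (D y) z) + (2 * lam) • m x (m y (D z)) +
        (lam * lam) • m x (m y z) := by
    intro x y z
    simp only [novikovProdOfDeriv_apply, map_add, map_smul, hD y]
    module
  refine ⟨?_, fun i j k x hx y hy z hz => ?_, fun i j k x hx y hy z hz => ?_⟩
  · intro i j x hx y hy
    rw [novikovProdOfDeriv_apply]
    exact add_mem (hmE i j x hx _ (hDeven j y hy)) (Submodule.smul_mem _ _ (hmE i j x hx y hy))
  · rw [hcc_left i j k x hx y hy z hz, hcc_left j i k y hy x hx z hz, hcc_right, hcc_right]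
    linear_combination (norm := module) -hm.mul_left_comm hx hy (hDeven k _ (hDeven k z hz))
      - lam • hm.mul_left_comm hx hy (hDeven k z hz)
  · have hDy := hDeven j y hy; have hDz := hDeven k z hz
    rw [hcc_left i j k x hx y hy z hz, hcc_left i k j x hx z hz y hy, hmC j k (D y) hDy (D z) hDz,
      hmC j k y hy (D z) hDz, hmC j k (D y) hDy z hz, hmC j k y hy z hz]
    simp only [map_smul]
    module

end CommAssocSuper

theorem map_novikovProdOfDeriv {m : A →ₗ[ℂ] A →ₗ[ℂ] A} {α D : A →ₗ[ℂ] A}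
    (hαm : ∀ x y : A, α (m x y) = m (α x) (α y)) (hDα : ∀ x : A, D (α x) = α (D x)) (lam : ℂ)
    (x y : A) : α (novikovProdOfDeriv m D lam x y) =
      novikovProdOfDeriv m D lam (α x) (α y) := by
  simp only [novikovProdOfDeriv_apply, map_add, map_smul, hαm, hDα]

theorem superHomGD_of_commAssoc_endo_general
    {A : Type*} [AddCommGroup A] [Module ℂ A]
    (gr : ZMod 2 → Submodule ℂ A)
    (m : A →ₗ[ℂ] A →ₗ[ℂ] A) (hm : CommAssocSuper gr m)
    (α : A →ₗ[ℂ] A) (hα : EvenLin gr α)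
    (hαhom : ∀ x y : A, α (m x y) = m (α x) (α y))
    (D : A →ₗ[ℂ] A) (hDeven : EvenLin gr D) (hD : IsDer m D)
    (hcomm : ∀ x : A, D (α x) = α (D x)) (lam : ℂ)
    (br : A →ₗ[ℂ] A →ₗ[ℂ] A)
    (hbr : ∀ (i j : ZMod 2), ∀ x ∈ gr i, ∀ y ∈ gr j,
      br x y = α (m x (D y)) - sg i j • α (m y (D x))) :
    SuperHomGD gr br ((m.compl₂ D + lam • m).compr₂ α) α := by
  have hN : HomNovikovSuper gr ((novikovProdOfDeriv m D lam).compr₂ α) α :=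
    (hm.novikovSuper_derivation hDeven hD lam).homNovikovSuper_compr₂ hα
      (map_novikovProdOfDeriv hαhom hcomm lam)
  refine hN.superHomGD fun i j x hx y hy => ?_
  simp only [hbr i j x hx y hy, LinearMap.compr₂_apply, novikovProdOfDeriv_apply, map_add,
    map_smul, hm.2.1 i j x hx y hy]
  module

/-- If `(A, ·)` is a commutative associative superalgebra with an even
algebra endomorphism `α` and an even derivation `D` with `Dα = αD`, and `λ ∈ ℂ`, then with
`x∘y = α(x·D(y)) + λ α(x·y)` and `[x,y]⁻ = α(x·D(y)) − (−1)^{|x||y|} α(y·D(x))`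
(on homogeneous elements), `(A, [·,·]⁻, ∘, α)` is a super Hom-Gel'fand-Dorfman
bialgebra. -/
theorem superHomGD_of_commAssoc_endo
    {A : Type*} [AddCommGroup A] [Module ℂ A]
    (gr : ZMod 2 → Submodule ℂ A) (hgr : IsSupergrading gr)
    (m : A →ₗ[ℂ] A →ₗ[ℂ] A) (hm : CommAssocSuper gr m)
    (α : A →ₗ[ℂ] A) (hα : EvenLin gr α)
    (hαhom : ∀ x y : A, α (m x y) = m (α x) (α y))
    (D : A →ₗ[ℂ] A) (hDeven : EvenLin gr D) (hD : IsDer m D)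
    (hcomm : ∀ x : A, D (α x) = α (D x)) (lam : ℂ)
    (br : A →ₗ[ℂ] A →ₗ[ℂ] A)
    (hbr : ∀ (i j : ZMod 2), ∀ x ∈ gr i, ∀ y ∈ gr j,
      br x y = α (m x (D y)) - sg i j • α (m y (D x))) :
    SuperHomGD gr br ((m.compl₂ D + lam • m).compr₂ α) α :=
  superHomGD_of_commAssoc_endo_general gr m hm α hα hαhom D hDeven hD hcomm lam br hbr
end
end
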